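/- For n ≥ 2, define g_i(q) = Σ_{j=0}^{i−2} q^{1+2j} and the 2×2 matrix product A_n(q) = ∏_{i=2}^{n} [[1, 1],[g_i(q), 0]]. Then the inversion polynomial over involutions satisfies I_n^{inv}(q) = (A_n(q))_{1,1} + (A_n(q))_{2,1}, where I_n^{inv}(q) = Σ_{σ∈I_n} q^{inv(σ)}. -/

import Mathlib

noncomputable section
open Finset Polynomial

/-- The set of involutions in the symmetric group on `Fin n`. -/
def Invols (n : ℕ) : Finset (Equiv.Perm (Fin n)) :=
  Finset.univ.filter (fun σ => σ * σ = 1)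

/-- The set of fixed-point-free involutions in the symmetric group on `Fin n`. -/
def FPFInvols (n : ℕ) : Finset (Equiv.Perm (Fin n)) :=
  Finset.univ.filter (fun σ => σ * σ = 1 ∧ ∀ i, σ i ≠ i)

/-- The number of inversions of a permutation of `Fin n`. -/
def invStat {n : ℕ} (σ : Equiv.Perm (Fin n)) : ℕ :=
  ((Finset.univ : Finset (Fin n × Fin n)).filter
    (fun p => p.1 < p.2 ∧ σ p.2 < σ p.1)).card

/-- The generating polynomial of inversions over involutions of `S_n`. -/
def IPoly (n : ℕ) : Polynomial ℚ := ∑ σ ∈ Invols n, Polynomial.X ^ invStat σ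

/-- The generating polynomial of inversions over fixed-point-free involutions of `S_n`. -/
def JPoly (n : ℕ) : Polynomial ℚ := ∑ σ ∈ FPFInvols n, Polynomial.X ^ invStat σ

/-- `g_i(q) = Σ_{j=0}^{i-2} q^{1+2j}`. -/
def gPoly (i : ℕ) : Polynomial ℚ := ∑ j ∈ Finset.range (i - 1), X ^ (1 + 2 * j)

/-- The matrix product `A_n(q) = ∏_{i=2}^{n} [[1,1],[g_i(q),0]]`, taken in
order of increasing `i`. -/
def Amat (n : ℕ) : Matrix (Fin 2) (Fin 2) (Polynomial ℚ) :=
  ((List.range (n - 1)).map (fun j => !![1, 1; gPoly (j + 2), 0])).prod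

/-!
An involution of `Fin (n + 2)` either fixes the last letter, and deleting it leaves an
involution of `Fin (n + 1)` with the same inversions, or pairs it with some `k : Fin (n + 1)`;
deleting both letters leaves an involution of `Fin n` and removes `2 (n - k) + 1` inversions.
Since `gPoly (n + 2) = ∑ k, q ^ (2 (n - k) + 1)`, this gives
`IPoly (n + 2) = IPoly (n + 1) + gPoly (n + 2) * IPoly n`. The first-column sums of `Amat`
obey the same recurrence, because the second column of `Amat (n + 1)` has the same sum as
the first column of `Amat n`, and both sequences start with `1, 1`.
-/

open Equiv Fin

theorem mem_Invols_iff_involutive {m : ℕ} {σ : Perm (Fin m)} :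
    σ ∈ Invols m ↔ Function.Involutive σ := by
  simp [Invols, Function.Involutive, Perm.ext_iff]

theorem Function.Injective.exists_involutive_semiconj {α β : Type*} {f : α → β}
    (hf : Function.Injective f) {τ : β → β} (hτ : Function.Involutive τ)
    (hmaps : ∀ a, τ (f a) ∈ Set.range f) :
    ∃ σ : α → α, Function.Involutive σ ∧ ∀ a, f (σ a) = τ (f a) := by
  choose σ hσ using hmaps
  exact ⟨σ, fun a => hf (by rw [hσ, hσ, hτ]), hσ⟩

theorem Fin.sum_univ_last_castSucc_succAbove {M : Type*} [AddCommMonoid M] {n : ℕ}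
    (k : Fin (n + 1)) (f : Fin (n + 2) → M) :
    ∑ x, f x = f (last (n + 1)) + f (castSucc k) + ∑ i, f (castSucc (k.succAbove i)) := by
  rw [Fin.sum_univ_castSucc, Fin.sum_univ_succAbove (fun y => f (castSucc y)) k]
  abel

theorem Fin.card_filter_le_castSucc {n : ℕ} (k : Fin (n + 1)) :
    #{j : Fin n | k ≤ castSucc j} = n - k := by
  have h := card_filter_add_card_filter_not (s := univ) (fun j : Fin n => (j : ℕ) < k)
  rw [card_filter_val_lt, card_univ, Fintype.card_fin] at h
  simp only [not_lt] at h
  change #{j : Fin n | (k : ℕ) ≤ j} = _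
  omega

theorem Fin.castSucc_succAbove_injective {n : ℕ} (k : Fin (n + 1)) :
    Function.Injective fun i : Fin n => castSucc (k.succAbove i) :=
  (castSucc_injective _).comp succAbove_right_injective

theorem Fin.cases_last_castSucc_succAbove {n : ℕ} (k : Fin (n + 1)) {P : Fin (n + 2) → Prop}
    (last : P (last (n + 1))) (self : P (castSucc k))
    (other : ∀ i, P (castSucc (k.succAbove i))) (x : Fin (n + 2)) : P x := by
  induction x using lastCases with
  | last => exact last
  | cast y =>
    rcases eq_or_ne y k with rfl | hy
    · exact self
    · obtain ⟨i, rfl⟩ := exists_succAbove_eq hy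
      exact other i

namespace Equiv.Perm

variable {m n : ℕ}

def insertFix (k : Fin (m + 1)) (σ : Perm (Fin m)) : Perm (Fin (m + 1)) :=
  (finSuccEquiv' k).symm.permCongr σ.optionCongr

@[simp] theorem insertFix_self (k : Fin (m + 1)) (σ : Perm (Fin m)) : insertFix k σ k = k := by
  simp [insertFix, permCongr_apply]

@[simp] theorem insertFix_succAbove (k : Fin (m + 1)) (σ : Perm (Fin m)) (i : Fin m) :
    insertFix k σ (k.succAbove i) = k.succAbove (σ i) := by
  simp [insertFix, permCongr_apply]

@[simp] theorem insertFix_last_castSucc (σ : Perm (Fin m)) (i : Fin m) :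
    insertFix (last m) σ (castSucc i) = castSucc (σ i) := by
  simpa only [succAbove_last] using insertFix_succAbove (last m) σ i

theorem involutive_insertFix {k : Fin (m + 1)} {σ : Perm (Fin m)} (hσ : Function.Involutive σ) :
    Function.Involutive (insertFix k σ) := by
  intro x
  rcases eq_or_ne x k with rfl | hx
  · simp
  · obtain ⟨i, rfl⟩ := exists_succAbove_eq hx
    simp [hσ i]

def pairWithLast (k : Fin (n + 1)) (σ : Perm (Fin n)) : Perm (Fin (n + 2)) :=
  swap (castSucc k) (last (n + 1)) * insertFix (last (n + 1)) (insertFix k σ)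

variable (k : Fin (n + 1)) (σ : Perm (Fin n))

@[simp] theorem pairWithLast_castSucc_succAbove (i : Fin n) :
    pairWithLast k σ (castSucc (k.succAbove i)) = castSucc (k.succAbove (σ i)) := by
  simp [pairWithLast, swap_apply_of_ne_of_ne, (castSucc_lt_last _).ne]

@[simp] theorem pairWithLast_castSucc : pairWithLast k σ (castSucc k) = last (n + 1) := by
  simp [pairWithLast]

@[simp] theorem pairWithLast_last : pairWithLast k σ (last (n + 1)) = castSucc k := by
  simp [pairWithLast]

theorem involutive_pairWithLast {σ : Perm (Fin n)} (hσ : Function.Involutive σ) :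
    Function.Involutive (pairWithLast k σ) := by
  intro x
  induction x using cases_last_castSucc_succAbove k <;> simp [hσ _]

end Equiv.Perm

open Equiv.Perm

theorem invStat_eq_sum {m : ℕ} (σ : Perm (Fin m)) :
    invStat σ = ∑ a, ∑ b, if a < b ∧ σ b < σ a then 1 else 0 := by
  rw [invStat, Finset.card_filter, Fintype.sum_prod_type]

theorem invStat_one {m : ℕ} : invStat (1 : Perm (Fin m)) = 0 :=
  card_eq_zero.2 <| filter_false_of_mem fun _ _ h => lt_asymm h.1 h.2

theorem invStat_insertFix_last {m : ℕ} (σ : Perm (Fin m)) :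
    invStat (insertFix (last m) σ) = invStat σ := by
  simp only [invStat_eq_sum, Fin.sum_univ_castSucc, insertFix_last_castSucc]
  simp [castSucc_lt_last, (le_last _).not_gt]

theorem invStat_pairWithLast {n : ℕ} (k : Fin (n + 1)) (σ : Perm (Fin n)) :
    invStat (pairWithLast k σ) = 2 * (n - k) + 1 + invStat σ := by
  have hk_lt (j : Fin n) : castSucc k < castSucc (k.succAbove j) ↔ k ≤ castSucc j := by
    rw [castSucc_lt_castSucc_iff, lt_succAbove_iff_le_castSucc]
  have hlt (i j : Fin n) :
      castSucc (k.succAbove i) < castSucc (k.succAbove j) ↔ i < j := by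
    rw [castSucc_lt_castSucc_iff, succAbove_lt_succAbove_iff]
  have hcount : (∑ j : Fin n, if k ≤ castSucc j then 1 else 0) = n - k := by
    rw [sum_boole, Nat.cast_id, card_filter_le_castSucc]
  -- Besides the inversions of `σ`, the pair `(k, last)` is inverted, and so is every pair
  -- `(k, j)` and `(i, last)` with `k ≤ j` and `k ≤ σ i`.
  rw [invStat_eq_sum σ, invStat_eq_sum]
  simp only [sum_univ_last_castSucc_succAbove k, pairWithLast_castSucc_succAbove,
    pairWithLast_castSucc, pairWithLast_last, castSucc_lt_last, hk_lt, hlt, (le_last _).not_gt,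
    lt_self_iff_false, false_and, and_false, true_and, and_true, if_true, if_false,
    sum_const_zero, zero_add, add_zero]
  rw [sum_add_distrib, hcount, Equiv.sum_comp σ (fun j => if k ≤ castSucc j then 1 else 0), hcount]
  omega

theorem sum_Invols_fixing_last (m : ℕ) :
    ∑ τ ∈ Invols (m + 1) with τ (last m) = last m, (X : ℚ[X]) ^ invStat τ = IPoly m := by
  refine (sum_bij (fun σ _ => insertFix (last m) σ) (fun σ hσ => ?_) (fun σ₁ _ σ₂ _ h => ?_)
    (fun τ hτ => ?_) (fun σ _ => by rw [invStat_insertFix_last])).symm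
  · rw [mem_Invols_iff_involutive] at hσ
    simp [mem_Invols_iff_involutive, involutive_insertFix hσ]
  · exact Perm.ext fun i => by simpa using DFunLike.congr_fun h (castSucc i)
  · obtain ⟨hτ, hlast⟩ := mem_filter.1 hτ
    rw [mem_Invols_iff_involutive] at hτ
    have hmaps (i : Fin m) : τ (castSucc i) ∈ Set.range castSucc :=
      exists_castSucc_eq.2 fun h => (castSucc_lt_last i).ne (hτ.injective (h.trans hlast.symm))
    obtain ⟨σ, hσ, hστ⟩ := (castSucc_injective m).exists_involutive_semiconj hτ hmaps
    refine ⟨hσ.toPerm, by simpa [mem_Invols_iff_involutive], ?_⟩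
    ext x
    induction x using lastCases <;> simp [hlast, hστ]

theorem sum_Invols_moving_last (n : ℕ) :
    ∑ τ ∈ Invols (n + 2) with τ (last (n + 1)) ≠ last (n + 1), (X : ℚ[X]) ^ invStat τ =
      ∑ p ∈ (univ : Finset (Fin (n + 1))) ×ˢ Invols n, X ^ (2 * (n - p.1) + 1 + invStat p.2) := by
  refine (sum_bij (fun p _ => pairWithLast p.1 p.2) (fun p hp => ?_) (fun p _ q _ h => ?_)
    (fun τ hτ => ?_) (fun p _ => by rw [invStat_pairWithLast])).symm
  · rw [mem_product, mem_Invols_iff_involutive] at hp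
    simp [mem_Invols_iff_involutive, involutive_pairWithLast _ hp.2, (castSucc_lt_last _).ne]
  · have hk : p.1 = q.1 := castSucc_injective _ (by simpa using DFunLike.congr_fun h (last _))
    refine Prod.ext hk (Perm.ext fun i => ?_)
    have := DFunLike.congr_fun h (castSucc (p.1.succAbove i))
    rw [pairWithLast_castSucc_succAbove, hk, pairWithLast_castSucc_succAbove] at this
    exact castSucc_succAbove_injective q.1 this
  · obtain ⟨hτ, hlast⟩ := mem_filter.1 hτ
    rw [mem_Invols_iff_involutive] at hτ
    obtain ⟨k, hk⟩ := exists_castSucc_eq.2 hlast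
    have hk' : τ (castSucc k) = last (n + 1) := by rw [hk, hτ]
    have hmaps (i : Fin n) :
        τ (castSucc (k.succAbove i)) ∈ Set.range fun i => castSucc (k.succAbove i) := by
      induction h : τ (castSucc (k.succAbove i)) using cases_last_castSucc_succAbove k with
      | last =>
        have := congrArg τ h
        rw [hτ, ← hk] at this
        exact absurd (castSucc_injective _ this) (succAbove_ne k i)
      | self =>
        have := congrArg τ h
        rw [hτ, hk'] at this
        exact absurd this (castSucc_lt_last _).ne
      | other j => exact ⟨j, rfl⟩
    obtain ⟨σ, hσ, hστ⟩ := (castSucc_succAbove_injective k).exists_involutive_semiconj hτ hmaps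
    refine ⟨(k, hσ.toPerm), by simpa [mem_Invols_iff_involutive], ?_⟩
    ext x
    induction x using cases_last_castSucc_succAbove k <;> simp [← hk, hk', hστ]

theorem gPoly_add_two (n : ℕ) :
    gPoly (n + 2) = ∑ k : Fin (n + 1), (X : ℚ[X]) ^ (2 * (n - k) + 1) := by
  rw [gPoly, show n + 2 - 1 = n + 1 from rfl,
    Fin.sum_univ_eq_sum_range (fun k => (X : ℚ[X]) ^ (2 * (n - k) + 1)), ← sum_range_reflect]
  refine sum_congr rfl fun k hk => ?_
  rw [mem_range] at hk
  congr 1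
  omega

theorem IPoly_add_two (n : ℕ) : IPoly (n + 2) = IPoly (n + 1) + gPoly (n + 2) * IPoly n := by
  rw [IPoly, ← sum_filter_add_sum_filter_not _ fun τ => τ (last (n + 1)) = last (n + 1),
    sum_Invols_fixing_last, sum_Invols_moving_last, sum_product, gPoly_add_two]
  simp only [IPoly, sum_mul_sum, ← pow_add]

theorem IPoly_of_le_one {m : ℕ} (hm : m ≤ 1) : IPoly m = 1 := by
  have : Subsingleton (Fin m) := Fin.subsingleton_iff_le_one.2 hm
  have hInvols : Invols m = {1} :=
    eq_singleton_iff_unique_mem.2 ⟨by simp [Invols], fun σ _ => Subsingleton.elim σ 1⟩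
  rw [IPoly, hInvols, sum_singleton, invStat_one, pow_zero]

theorem Amat_of_le_one {n : ℕ} (hn : n ≤ 1) : Amat n = 1 := by
  rw [Amat, Nat.sub_eq_zero_of_le hn]
  rfl

theorem Amat_add_two (n : ℕ) : Amat (n + 2) = Amat (n + 1) * !![1, 1; gPoly (n + 2), 0] := by
  rw [Amat, Amat, show n + 2 - 1 = n + 1 from rfl, Nat.add_sub_cancel, List.range_succ,
    List.map_append, List.prod_append, List.map_singleton, List.prod_singleton]

theorem Amat_add_one_col_one_sum (n : ℕ) :
    Amat (n + 1) 0 1 + Amat (n + 1) 1 1 = Amat n 0 0 + Amat n 1 0 := by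
  cases n with
  | zero => simp [Amat_of_le_one]
  | succ n => simp [Amat_add_two, Matrix.mul_apply]

theorem Amat_add_two_col_zero_sum (n : ℕ) :
    Amat (n + 2) 0 0 + Amat (n + 2) 1 0 =
      (Amat (n + 1) 0 0 + Amat (n + 1) 1 0) + gPoly (n + 2) * (Amat n 0 0 + Amat n 1 0) := by
  rw [← Amat_add_one_col_one_sum n]
  simp only [Amat_add_two, Matrix.mul_apply, Fin.sum_univ_two, Matrix.of_apply, Matrix.cons_val',
    Matrix.cons_val_zero, Matrix.cons_val_one, Matrix.cons_val_fin_one]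
  ring

theorem involution_inversion_matrix_product_general (n : ℕ) :
    IPoly n = Amat n 0 0 + Amat n 1 0 := by
  induction n using Nat.twoStepInduction with
  | zero => simp [IPoly_of_le_one, Amat_of_le_one]
  | one => simp [IPoly_of_le_one, Amat_of_le_one]
  | more n ih₀ ih₁ => rw [IPoly_add_two, Amat_add_two_col_zero_sum, ih₀, ih₁]

theorem involution_inversion_matrix_product (n : ℕ) (hn : 2 ≤ n) :
    IPoly n = Amat n 0 0 + Amat n 1 0 :=
  involution_inversion_matrix_product_general n
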